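/- arXiv:2311.16925 — 2 statements merged into one kernel-verified Lean document; each statement's English description precedes it below -/
import Mathlib

section
/- For fixed a, b in Fin m with m ≥ 1, the sum over c in Fin m of μ(a,c)·μ(c,b) equals m·δ_{a,0}·δ_{b,0} + (1 - δ_{a,0})·(1 - δ_{b,0})·(1 + δ_{a,b}). -/
def wronMu {m : ℕ} [NeZero m] (x y : Fin m) : ℤ :=
  if x = 0 ∨ y = 0 then 1 else if x = y then -1 else 0

def kdel {m : ℕ} (x y : Fin m) : ℤ := if x = y then 1 else 0

/-! Off the zero row and column, `μ` is a difference of Kronecker deltas: for `a ≠ 0`,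
`μ(a, ·) = δ(·, 0) - δ(·, a)`, while `μ(0, ·)` and `μ(·, 0)` are constantly `1`. Each case of the
sum then reduces to `∑ c, δ(c, x) δ(c, y) = δ(x, y)`. -/

section KroneckerDelta

variable {m : ℕ}

@[simp]
theorem kdel_self (x : Fin m) : kdel x x = 1 := if_pos rfl

theorem kdel_of_ne {x y : Fin m} (h : x ≠ y) : kdel x y = 0 := if_neg h

theorem kdel_comm (x y : Fin m) : kdel x y = kdel y x := by
  simp only [kdel, eq_comm]

@[simp]
theorem sum_kdel_left (x : Fin m) : ∑ c : Fin m, kdel c x = 1 := by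
  simp [kdel]

@[simp]
theorem sum_kdel_mul_kdel (x y : Fin m) : ∑ c : Fin m, kdel c x * kdel c y = kdel x y := by
  simp [kdel, eq_comm]

end KroneckerDelta

section Mu

variable {m : ℕ} [NeZero m]

@[simp]
theorem wronMu_zero_left (y : Fin m) : wronMu 0 y = 1 := if_pos (Or.inl rfl)

@[simp]
theorem wronMu_zero_right (x : Fin m) : wronMu x 0 = 1 := if_pos (Or.inr rfl)

theorem wronMu_of_ne_zero_left {a : Fin m} (ha : a ≠ 0) (c : Fin m) :
    wronMu a c = kdel c 0 - kdel c a := by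
  unfold wronMu kdel
  split_ifs <;> grind

theorem wronMu_of_ne_zero_right {b : Fin m} (hb : b ≠ 0) (c : Fin m) :
    wronMu c b = kdel c 0 - kdel c b := by
  unfold wronMu kdel
  split_ifs <;> grind

end Mu

theorem sum_mu_sq {m : ℕ} [NeZero m] (a b : Fin m) :
    ∑ c : Fin m, wronMu a c * wronMu c b =
      (m : ℤ) * kdel a 0 * kdel b 0 +
        (1 - kdel a 0) * (1 - kdel b 0) * (1 + kdel a b) := by
  rcases eq_or_ne a 0 with rfl | ha <;> rcases eq_or_ne b 0 with rfl | hb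
  · simp
  · simp [wronMu_of_ne_zero_right hb, Finset.sum_sub_distrib, kdel_of_ne hb]
  · simp [wronMu_of_ne_zero_left ha, Finset.sum_sub_distrib, kdel_of_ne ha]
  · simp only [wronMu_of_ne_zero_left ha, wronMu_of_ne_zero_right hb, sub_mul, mul_sub,
      Finset.sum_sub_distrib, sum_kdel_mul_kdel, kdel_self, kdel_of_ne ha, kdel_of_ne hb,
      kdel_comm 0 b]
    ring
end

section
/- The matrices W_a and W_0 are scaled inverses of each other: W_a · W_0 = W_0 · W_a = (m_1 · m_2 · ⋯ · m_n) · I, where I is the identity matrix indexed by genotypes. -/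
/-!
Both matrices are Kronecker products over the loci of `m × m` matrices, and the matrix product of
two such products is the Kronecker product of the locus-wise products. So it suffices to treat a
single locus, where `W_a = J - m D` with `J` the all-ones matrix and `D` the diagonal projection
onto the nonzero alleles; the columns of `μ` sum to `m e₀`, and the identity is a short entrywise
computation. The second product follows from the first by transposing, as both matrices are
symmetric.
-/

def wronOmega {m : ℕ} [NeZero m] (x y : Fin m) : ℤ :=
  if x ≠ 0 ∧ x = y then 1 else 0

def Wa {n : ℕ} (m : Fin n → ℕ) [∀ i, NeZero (m i)] :
    Matrix (∀ i, Fin (m i)) (∀ i, Fin (m i)) ℤ :=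
  fun g h => ∏ i, (1 - (m i : ℤ) * wronOmega (g i) (h i))

def W0 {n : ℕ} (m : Fin n → ℕ) [∀ i, NeZero (m i)] :
    Matrix (∀ i, Fin (m i)) (∀ i, Fin (m i)) ℤ :=
  fun g h => ∏ i, wronMu (g i) (h i)

namespace Matrix

variable {ι R : Type*} [Fintype ι] [CommSemiring R] {κ α β : ι → Type*}

def piKronecker (A : ∀ i, Matrix (α i) (β i) R) : Matrix (∀ i, α i) (∀ i, β i) R :=
  of fun g h => ∏ i, A i (g i) (h i)

theorem piKronecker_mul [DecidableEq ι] [∀ i, Fintype (β i)]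
    (A : ∀ i, Matrix (α i) (β i) R) (B : ∀ i, Matrix (β i) (κ i) R) :
    piKronecker A * piKronecker B = piKronecker fun i => A i * B i := by
  ext g h
  simp only [piKronecker, mul_apply, of_apply, Fintype.prod_sum, Finset.prod_mul_distrib]

theorem piKronecker_smul_one [∀ i, DecidableEq (κ i)] (c : ι → R) :
    (piKronecker fun i => c i • (1 : Matrix (κ i) (κ i) R)) = (∏ i, c i) • 1 := by
  ext g h
  simp only [piKronecker, of_apply, smul_apply, one_apply, smul_eq_mul, mul_ite, mul_one, mul_zero]
  by_cases hgh : g = h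
  · simp [hgh]
  · obtain ⟨i, hi⟩ := Function.ne_iff.mp hgh
    rw [if_neg hgh]
    exact Finset.prod_eq_zero (Finset.mem_univ i) (if_neg hi)

end Matrix

open Matrix

section Locus

variable {m : ℕ} [NeZero m]

theorem wronOmega_comm (x y : Fin m) : wronOmega x y = wronOmega y x := by
  by_cases h : x = y
  · rw [h]
  · simp [wronOmega, h, Ne.symm h]

theorem wronMu_comm (x y : Fin m) : wronMu x y = wronMu y x := by
  simp only [wronMu, or_comm, eq_comm (a := x)]

theorem sum_wronMu_left (y : Fin m) : ∑ x, wronMu x y = if y = 0 then (m : ℤ) else 0 := by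
  by_cases hy : y = 0
  · simp [hy, wronMu]
  · have hrow (x : Fin m) : wronMu x y = (if x = 0 then 1 else 0) - (if x = y then 1 else 0) := by
      by_cases hx : x = 0
      · simp [wronMu, hx, Ne.symm hy]
      · by_cases hxy : x = y <;> simp [wronMu, hx, hy, hxy]
    simp [hrow, Finset.sum_sub_distrib, hy]

theorem sum_wronOmega_mul (x : Fin m) (f : Fin m → ℤ) :
    ∑ k, wronOmega x k * f k = if x = 0 then 0 else f x := by
  by_cases hx : x = 0 <;> simp [wronOmega, hx]

def locusWa (m : ℕ) [NeZero m] : Matrix (Fin m) (Fin m) ℤ :=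
  of fun x y => 1 - (m : ℤ) * wronOmega x y

def locusW0 (m : ℕ) [NeZero m] : Matrix (Fin m) (Fin m) ℤ :=
  of wronMu

theorem locusWa_mul_locusW0 : locusWa m * locusW0 m = (m : ℤ) • 1 := by
  ext x y
  have hsum : ∑ k, (1 - (m : ℤ) * wronOmega x k) * wronMu k y =
      (if y = 0 then (m : ℤ) else 0) - m * (if x = 0 then 0 else wronMu x y) := by
    simp only [sub_mul, one_mul, mul_assoc, Finset.sum_sub_distrib, ← Finset.mul_sum,
      sum_wronMu_left, sum_wronOmega_mul]
  simp only [locusWa, locusW0, mul_apply, of_apply, hsum, Matrix.smul_apply, one_apply, smul_eq_mul]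
  by_cases hx : x = 0 <;> by_cases hy : y = 0 <;> by_cases hxy : x = y <;>
    simp_all [wronMu]

end Locus

theorem Wa_eq_piKronecker {n : ℕ} (m : Fin n → ℕ) [∀ i, NeZero (m i)] :
    Wa m = piKronecker fun i => locusWa (m i) :=
  rfl

theorem W0_eq_piKronecker {n : ℕ} (m : Fin n → ℕ) [∀ i, NeZero (m i)] :
    W0 m = piKronecker fun i => locusW0 (m i) :=
  rfl

theorem Wa_transpose {n : ℕ} (m : Fin n → ℕ) [∀ i, NeZero (m i)] : (Wa m)ᵀ = Wa m := by
  ext g h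
  simp only [transpose_apply, Wa, wronOmega_comm (g _)]

theorem W0_transpose {n : ℕ} (m : Fin n → ℕ) [∀ i, NeZero (m i)] : (W0 m)ᵀ = W0 m := by
  ext g h
  simp only [transpose_apply, W0, wronMu_comm (g _)]

theorem Wa_W0_scaled_inverse {n : ℕ} (m : Fin n → ℕ) [∀ i, NeZero (m i)] :
    Wa m * W0 m = ((∏ i, m i : ℕ) : ℤ) • (1 : Matrix (∀ i, Fin (m i)) (∀ i, Fin (m i)) ℤ) ∧
    W0 m * Wa m = ((∏ i, m i : ℕ) : ℤ) • (1 : Matrix (∀ i, Fin (m i)) (∀ i, Fin (m i)) ℤ) := by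
  have hWaW0 : Wa m * W0 m = ((∏ i, m i : ℕ) : ℤ) • 1 := by
    rw [Wa_eq_piKronecker, W0_eq_piKronecker, piKronecker_mul]
    simp only [locusWa_mul_locusW0, piKronecker_smul_one, Nat.cast_prod]
  refine ⟨hWaW0, ?_⟩
  rw [← Wa_transpose, ← W0_transpose, ← transpose_mul, hWaW0, transpose_smul, transpose_one]
end
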